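/- arXiv:1911.02665 — 3 statements merged into one kernel-verified Lean document; each statement's English description precedes it below -/
import Mathlib

section
/- For any c > 0, β > 0, and exponent γ with 0 < γ/β < 2, the function a ↦ a^{-γ-1}/(1 + (c·a^{-β})²) is integrable on (0, a₁] for every a₁ > 0. -/
open MeasureTheory Real Set

/-- Integrability underlying Lemma 3.4: for `c, β > 0` and `0 < γ/β < 2`, the function
`a ↦ a^{-γ-1}/(1 + (c a^{-β})²)` is integrable on `(0, a₁]` for every `a₁ > 0`. -/
theorem stmt_2 (c β γ : ℝ) (hc : 0 < c) (hβ : 0 < β) (hγ : 0 < γ / β) (hγ' : γ / β < 2) :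
    ∀ a₁ : ℝ, 0 < a₁ →
      IntegrableOn (fun a : ℝ => a ^ (-γ - 1) / (1 + (c * a ^ (-β)) ^ 2)) (Ioc 0 a₁) := by
  intro a₁ ha₁
  have hγβ : γ < 2 * β := by
    have := (div_lt_iff₀ hβ).mp hγ'
    linarith
  have hmaj : IntegrableOn (fun a : ℝ => c⁻¹ ^ 2 * a ^ (2 * β - γ - 1)) (Ioc 0 a₁) := by
    have h : IntervalIntegrable (fun x : ℝ => x ^ (2 * β - γ - 1)) volume 0 a₁ :=
      intervalIntegral.intervalIntegrable_rpow' (by linarith)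
    exact h.1.const_mul _
  refine hmaj.mono' ?_ ?_
  · apply Measurable.aestronglyMeasurable
    measurability
  · rw [ae_restrict_iff' measurableSet_Ioc]
    refine ae_of_all _ fun a ha => ?_
    have ha0 : 0 < a := ha.1
    have hnum : 0 < a ^ (-γ - 1) := rpow_pos_of_pos ha0 _
    have hden' : 0 < c ^ 2 * (a ^ (-β)) ^ 2 :=
      mul_pos (pow_pos hc 2) (pow_pos (rpow_pos_of_pos ha0 _) 2)
    have hden : 0 < 1 + (c * a ^ (-β)) ^ 2 := by positivity
    rw [Real.norm_eq_abs, abs_of_nonneg (le_of_lt (div_pos hnum hden))]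
    have hle : c ^ 2 * (a ^ (-β)) ^ 2 ≤ 1 + (c * a ^ (-β)) ^ 2 := by
      rw [mul_pow]; linarith
    calc a ^ (-γ - 1) / (1 + (c * a ^ (-β)) ^ 2)
        ≤ a ^ (-γ - 1) / (c ^ 2 * (a ^ (-β)) ^ 2) :=
          div_le_div_of_nonneg_left (le_of_lt hnum) hden' hle
      _ = c⁻¹ ^ 2 * a ^ (2 * β - γ - 1) := by
          rw [← rpow_natCast (a ^ (-β)) 2, ← rpow_mul (le_of_lt ha0)]
          rw [div_eq_mul_inv, mul_inv, ← rpow_neg (le_of_lt ha0)]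
          rw [mul_comm, mul_assoc, ← rpow_add ha0, inv_pow]
          norm_num
          left; congr 1; ring
end

section
/- Let Q₀, D : (0,1) → ℝ be positive measurable functions with ∫₀¹ Q₀(a) da = 1 and C₀ := (∫₀¹ 1/(Q₀(z)D(z)) dz)^{1/2} < ∞. Let g : (0,1) → ℝ be absolutely continuous with ∫₀¹ Q₀(z)D(z)(g'(z))² dz =: H < ∞. Then for every a ∈ (0,1), |g(a) − ∫₀¹ g(a')Q₀(a') da'| ≤ C₀ · H^{1/2}. -/
open MeasureTheory Real Set
open scoped Interval

/-- Cauchy–Schwarz for real integrals of nonnegative functions. -/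
lemma cs_aux {μ : Measure ℝ} {f h : ℝ → ℝ} (hf0 : ∀ x, 0 ≤ f x) (hh0 : ∀ x, 0 ≤ h x)
    (hfm : AEStronglyMeasurable f μ) (hhm : AEStronglyMeasurable h μ)
    (hf2 : Integrable (fun x => f x ^ 2) μ) (hh2 : Integrable (fun x => h x ^ 2) μ) :
    ∫ x, f x * h x ∂μ ≤ Real.sqrt (∫ x, f x ^ 2 ∂μ) * Real.sqrt (∫ x, h x ^ 2 ∂μ) := by
  have hpq : (2:ℝ).HolderConjugate 2 := by rw [Real.holderConjugate_iff]; norm_num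
  have hMf : MemLp f (ENNReal.ofReal 2) μ := by
    rw [show ENNReal.ofReal 2 = 2 by norm_num]
    exact (memLp_two_iff_integrable_sq hfm).mpr hf2
  have hMh : MemLp h (ENNReal.ofReal 2) μ := by
    rw [show ENNReal.ofReal 2 = 2 by norm_num]
    exact (memLp_two_iff_integrable_sq hhm).mpr hh2
  have hmain := integral_mul_le_Lp_mul_Lq_of_nonneg hpq (ae_of_all _ hf0) (ae_of_all _ hh0) hMf hMh
  have hrw : ∀ u : ℝ → ℝ, (∫ x, u x ^ (2:ℝ) ∂μ) = ∫ x, u x ^ 2 ∂μ := by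
    intro u
    refine integral_congr_ae (ae_of_all _ fun x => ?_)
    show u x ^ (2:ℝ) = u x ^ 2
    rw [show (2:ℝ) = ((2:ℕ):ℝ) by norm_num, Real.rpow_natCast]
  rw [hrw f, hrw h] at hmain
  refine hmain.trans_eq ?_
  rw [Real.sqrt_eq_rpow, Real.sqrt_eq_rpow]

/-- Core of Lemma 3.2 (a priori bound): if `g` is absolutely continuous on `(0,1)` with
derivative `g'`, `Q₀` is a probability density on `(0,1)`, `C₀ = (∫₀¹ 1/(Q₀ D))^{1/2} < ∞`
and the weighted Dirichlet energy `H = ∫₀¹ Q₀ D (g')²` is finite, then the deviation of `g`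
from its `Q₀`-weighted average is bounded by `C₀ H^{1/2}` pointwise. -/
theorem stmt_4 (Q₀ D g g' : ℝ → ℝ)
    (hQ₀pos : ∀ a ∈ Ioo (0:ℝ) 1, 0 < Q₀ a) (hDpos : ∀ a ∈ Ioo (0:ℝ) 1, 0 < D a)
    (hQ₀prob : ∫ a in Ioo (0:ℝ) 1, Q₀ a = 1)
    (hQ₀int : IntegrableOn Q₀ (Ioo (0:ℝ) 1))
    (hinvint : IntegrableOn (fun z => 1 / (Q₀ z * D z)) (Ioo (0:ℝ) 1))
    (hAC : ∀ a ∈ Ioo (0:ℝ) 1, ∀ a' ∈ Ioo (0:ℝ) 1,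
      g a - g a' = ∫ z in a'..a, g' z)
    (hEnergy : IntegrableOn (fun z => Q₀ z * D z * (g' z) ^ 2) (Ioo (0:ℝ) 1))
    (hgQint : IntegrableOn (fun a' => g a' * Q₀ a') (Ioo (0:ℝ) 1)) :
    ∀ a ∈ Ioo (0:ℝ) 1,
      |g a - ∫ a' in Ioo (0:ℝ) 1, g a' * Q₀ a'| ≤
        Real.sqrt (∫ z in Ioo (0:ℝ) 1, 1 / (Q₀ z * D z)) *
          Real.sqrt (∫ z in Ioo (0:ℝ) 1, Q₀ z * D z * (g' z) ^ 2) := by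
  intro a ha
  set C : ℝ := Real.sqrt (∫ z in Ioo (0:ℝ) 1, 1 / (Q₀ z * D z)) with hC
  set Hs : ℝ := Real.sqrt (∫ z in Ioo (0:ℝ) 1, Q₀ z * D z * (g' z) ^ 2) with hHs
  have hCH0 : 0 ≤ C * Hs := mul_nonneg (Real.sqrt_nonneg _) (Real.sqrt_nonneg _)
  have hinv_nonneg : 0 ≤ᵐ[volume.restrict (Ioo (0:ℝ) 1)] fun z => 1 / (Q₀ z * D z) :=
    (ae_restrict_iff' measurableSet_Ioo).mpr (ae_of_all _ fun z hz =>
      le_of_lt (one_div_pos.mpr (mul_pos (hQ₀pos z hz) (hDpos z hz))))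
  have hen_nonneg : 0 ≤ᵐ[volume.restrict (Ioo (0:ℝ) 1)] fun z => Q₀ z * D z * (g' z) ^ 2 :=
    (ae_restrict_iff' measurableSet_Ioo).mpr (ae_of_all _ fun z hz =>
      mul_nonneg (le_of_lt (mul_pos (hQ₀pos z hz) (hDpos z hz))) (sq_nonneg _))
  -- Step 1: pointwise bound on |g a - g a'|
  have key : ∀ a' ∈ Ioo (0:ℝ) 1, |g a - g a'| ≤ C * Hs := by
    intro a' ha'
    have hsub : Ι a' a ⊆ Ioo (0:ℝ) 1 := by
      intro z hz
      rw [Set.uIoc] at hz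
      exact ⟨lt_of_lt_of_le (lt_min ha'.1 ha.1) (le_of_lt hz.1),
        lt_of_le_of_lt hz.2 (max_lt ha'.2 ha.2)⟩
    have hqd : ∀ z ∈ Ι a' a, 0 < Q₀ z * D z := fun z hz =>
      mul_pos (hQ₀pos z (hsub hz)) (hDpos z (hsub hz))
    set f : ℝ → ℝ := fun z => Real.sqrt (1 / (Q₀ z * D z)) with hf
    set h : ℝ → ℝ := fun z => Real.sqrt (Q₀ z * D z * (g' z) ^ 2) with hh
    have hμle : volume.restrict (Ι a' a) ≤ volume.restrict (Ioo (0:ℝ) 1) :=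
      Measure.restrict_mono hsub le_rfl
    have hfm : AEStronglyMeasurable f (volume.restrict (Ι a' a)) :=
      Real.continuous_sqrt.comp_aestronglyMeasurable
        (hinvint.aestronglyMeasurable.mono_measure hμle)
    have hhm : AEStronglyMeasurable h (volume.restrict (Ι a' a)) :=
      Real.continuous_sqrt.comp_aestronglyMeasurable
        (hEnergy.aestronglyMeasurable.mono_measure hμle)
    have hf2eq : ∀ᵐ z ∂(volume.restrict (Ι a' a)), f z ^ 2 = 1 / (Q₀ z * D z) :=
      (ae_restrict_iff' measurableSet_uIoc).mpr (ae_of_all _ fun z hz =>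
        Real.sq_sqrt (le_of_lt (one_div_pos.mpr (hqd z hz))))
    have hh2eq : ∀ᵐ z ∂(volume.restrict (Ι a' a)), h z ^ 2 = Q₀ z * D z * (g' z) ^ 2 :=
      (ae_restrict_iff' measurableSet_uIoc).mpr (ae_of_all _ fun z hz =>
        Real.sq_sqrt (mul_nonneg (le_of_lt (hqd z hz)) (sq_nonneg _)))
    have hf2 : Integrable (fun z => f z ^ 2) (volume.restrict (Ι a' a)) :=
      ((hinvint.mono_set hsub).congr (hf2eq.mono fun z hz => hz.symm))
    have hh2 : Integrable (fun z => h z ^ 2) (volume.restrict (Ι a' a)) :=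
      ((hEnergy.mono_set hsub).congr (hh2eq.mono fun z hz => hz.symm))
    have hprod : ∀ᵐ z ∂(volume.restrict (Ι a' a)), |g' z| = f z * h z :=
      (ae_restrict_iff' measurableSet_uIoc).mpr (ae_of_all _ fun z hz => by
        have h1 : 0 < Q₀ z * D z := hqd z hz
        rw [hf, hh]
        rw [← Real.sqrt_mul (le_of_lt (one_div_pos.mpr h1))]
        rw [show 1 / (Q₀ z * D z) * (Q₀ z * D z * (g' z) ^ 2) = (g' z) ^ 2 by
          rw [← mul_assoc, one_div_mul_cancel h1.ne', one_mul] ]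
        exact (Real.sqrt_sq_eq_abs _).symm)
    calc |g a - g a'| = |∫ z in a'..a, g' z| := by rw [hAC a ha a' ha']
      _ ≤ ∫ z in Ι a' a, |g' z| := by
          simpa [Real.norm_eq_abs] using
            intervalIntegral.norm_integral_le_integral_norm_uIoc (f := g') (a := a') (b := a)
              (μ := volume)
      _ = ∫ z in Ι a' a, f z * h z := integral_congr_ae hprod
      _ ≤ Real.sqrt (∫ z in Ι a' a, f z ^ 2) * Real.sqrt (∫ z in Ι a' a, h z ^ 2) :=
          cs_aux (fun x => Real.sqrt_nonneg _) (fun x => Real.sqrt_nonneg _) hfm hhm hf2 hh2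
      _ ≤ C * Hs := by
          have e1 : (∫ z in Ι a' a, f z ^ 2) = ∫ z in Ι a' a, 1 / (Q₀ z * D z) :=
            integral_congr_ae hf2eq
          have e2 : (∫ z in Ι a' a, h z ^ 2) = ∫ z in Ι a' a, Q₀ z * D z * (g' z) ^ 2 :=
            integral_congr_ae hh2eq
          rw [e1, e2]
          exact mul_le_mul
            (Real.sqrt_le_sqrt (setIntegral_mono_set hinvint hinv_nonneg
              (HasSubset.Subset.eventuallyLE hsub)))
            (Real.sqrt_le_sqrt (setIntegral_mono_set hEnergy hen_nonneg
              (HasSubset.Subset.eventuallyLE hsub)))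
            (Real.sqrt_nonneg _) (Real.sqrt_nonneg _)
  -- Step 2: average out
  have hgaQ : IntegrableOn (fun a' => g a * Q₀ a') (Ioo (0:ℝ) 1) := hQ₀int.const_mul (g a)
  have h1 : g a - ∫ a' in Ioo (0:ℝ) 1, g a' * Q₀ a'
      = ∫ a' in Ioo (0:ℝ) 1, (g a - g a') * Q₀ a' := by
    simp_rw [sub_mul]
    rw [integral_sub hgaQ hgQint, integral_const_mul, hQ₀prob, mul_one]
  have hint : IntegrableOn (fun a' => (g a - g a') * Q₀ a') (Ioo (0:ℝ) 1) := by
    have := hgaQ.sub hgQint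
    simpa [sub_mul, Pi.sub_def] using this
  rw [h1]
  calc |∫ a' in Ioo (0:ℝ) 1, (g a - g a') * Q₀ a'|
      ≤ ∫ a' in Ioo (0:ℝ) 1, |g a - g a'| * |Q₀ a'| := by
        simpa [Real.norm_eq_abs] using
          norm_integral_le_integral_norm (μ := volume.restrict (Ioo (0:ℝ) 1))
            (f := fun a' => (g a - g a') * Q₀ a')
    _ ≤ ∫ a' in Ioo (0:ℝ) 1, C * Hs * Q₀ a' := by
        refine integral_mono_ae (by simpa [abs_mul] using hint.abs) (hQ₀int.const_mul _) ?_
        refine (ae_restrict_iff' measurableSet_Ioo).mpr (ae_of_all _ fun a' ha' => ?_)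
        show |g a - g a'| * |Q₀ a'| ≤ C * Hs * Q₀ a'
        rw [abs_of_pos (hQ₀pos a' ha')]
        exact mul_le_mul_of_nonneg_right (key a' ha') (le_of_lt (hQ₀pos a' ha'))
    _ = C * Hs := by rw [integral_const_mul, hQ₀prob, mul_one]
end

section
/- Suppose g_ε : (0,1) → ℝ is absolutely continuous with ∫₀¹ Q₀ D (g_ε')² ≤ B ε^{γ} for some γ > 0, where Q₀ is a probability density and ∫₀¹ 1/(Q₀D) < ∞. Let m_ε = ∫₀¹ g_ε Q₀ da. Then sup_{a∈(0,1)} |g_ε(a) − m_ε| ≤ C B^{1/2} ε^{γ/2} with C = (∫₀¹ 1/(Q₀D))^{1/2}; in particular g_ε − m_ε → 0 uniformly on (0,1) as ε → 0. -/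
open MeasureTheory Real Set Filter
open scoped Interval

lemma cs_sqrt {μ : Measure ℝ} (u v : ℝ → ℝ) (hu : Integrable u μ) (hv : Integrable v μ)
    (hu0 : 0 ≤ᵐ[μ] u) (hv0 : 0 ≤ᵐ[μ] v) :
    ∫ x, Real.sqrt (u x) * Real.sqrt (v x) ∂μ ≤
      Real.sqrt (∫ x, u x ∂μ) * Real.sqrt (∫ x, v x ∂μ) := by
  have hpq : (2:ℝ).HolderConjugate 2 := Real.holderConjugate_iff.mpr ⟨one_lt_two, by norm_num⟩
  have hsu : AEStronglyMeasurable (fun x => Real.sqrt (u x)) μ :=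
    Real.continuous_sqrt.comp_aestronglyMeasurable hu.aestronglyMeasurable
  have hsv : AEStronglyMeasurable (fun x => Real.sqrt (v x)) μ :=
    Real.continuous_sqrt.comp_aestronglyMeasurable hv.aestronglyMeasurable
  have hmu : MemLp (fun x => Real.sqrt (u x)) 2 μ := by
    rw [memLp_two_iff_integrable_sq hsu]
    refine hu.congr ?_
    filter_upwards [hu0] with x hx
    rw [Real.sq_sqrt hx]
  have hmv : MemLp (fun x => Real.sqrt (v x)) 2 μ := by
    rw [memLp_two_iff_integrable_sq hsv]
    refine hv.congr ?_
    filter_upwards [hv0] with x hx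
    rw [Real.sq_sqrt hx]
  have h := integral_mul_le_Lp_mul_Lq_of_nonneg hpq
    (ae_of_all μ fun x => Real.sqrt_nonneg (u x))
    (ae_of_all μ fun x => Real.sqrt_nonneg (v x))
    (by simpa using hmu) (by simpa using hmv)
  calc ∫ x, Real.sqrt (u x) * Real.sqrt (v x) ∂μ
      ≤ (∫ x, Real.sqrt (u x) ^ (2:ℝ) ∂μ) ^ (1/(2:ℝ)) *
        (∫ x, Real.sqrt (v x) ^ (2:ℝ) ∂μ) ^ (1/(2:ℝ)) := h
    _ = Real.sqrt (∫ x, u x ∂μ) * Real.sqrt (∫ x, v x ∂μ) := by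
        have hcu : ∫ x, Real.sqrt (u x) ^ (2:ℝ) ∂μ = ∫ x, u x ∂μ := by
          refine integral_congr_ae ?_
          filter_upwards [hu0] with x hx
          rw [Real.rpow_two, Real.sq_sqrt hx]
        have hcv : ∫ x, Real.sqrt (v x) ^ (2:ℝ) ∂μ = ∫ x, v x ∂μ := by
          refine integral_congr_ae ?_
          filter_upwards [hv0] with x hx
          rw [Real.rpow_two, Real.sq_sqrt hx]
        rw [hcu, hcv, Real.sqrt_eq_rpow, Real.sqrt_eq_rpow]

/-- Uniform local equilibrium: if `g_ε` is absolutely continuous on `(0,1)` with weighted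
Dirichlet energy `∫₀¹ Q₀ D (g_ε')² ≤ B ε^γ` (`γ > 0`), `Q₀` a probability density and
`∫₀¹ 1/(Q₀ D) < ∞`, then with `m_ε = ∫₀¹ g_ε Q₀`,
`sup_a |g_ε(a) − m_ε| ≤ C B^{1/2} ε^{γ/2}` where `C = (∫₀¹ 1/(Q₀D))^{1/2}`; in particular
`g_ε − m_ε → 0` uniformly on `(0,1)` as `ε → 0⁺`. -/
theorem stmt_19 (Q₀ D : ℝ → ℝ) (g g' : ℝ → ℝ → ℝ) (B γ : ℝ)
    (hB : 0 < B) (hγ : 0 < γ)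
    (hQ₀pos : ∀ a ∈ Ioo (0:ℝ) 1, 0 < Q₀ a) (hDpos : ∀ a ∈ Ioo (0:ℝ) 1, 0 < D a)
    (hQ₀prob : ∫ a in Ioo (0:ℝ) 1, Q₀ a = 1)
    (hinvint : IntegrableOn (fun z => 1 / (Q₀ z * D z)) (Ioo (0:ℝ) 1))
    (hAC : ∀ ε > (0:ℝ), ∀ a ∈ Ioo (0:ℝ) 1, ∀ a' ∈ Ioo (0:ℝ) 1,
      g ε a - g ε a' = ∫ z in a'..a, g' ε z)
    (hEnergyInt : ∀ ε > (0:ℝ),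
      IntegrableOn (fun z => Q₀ z * D z * (g' ε z) ^ 2) (Ioo (0:ℝ) 1))
    (hEnergy : ∀ ε > (0:ℝ),
      ∫ z in Ioo (0:ℝ) 1, Q₀ z * D z * (g' ε z) ^ 2 ≤ B * ε ^ γ)
    (hgQint : ∀ ε > (0:ℝ), IntegrableOn (fun a => g ε a * Q₀ a) (Ioo (0:ℝ) 1)) :
    (∀ ε > (0:ℝ), ∀ a ∈ Ioo (0:ℝ) 1,
      |g ε a - ∫ a' in Ioo (0:ℝ) 1, g ε a' * Q₀ a'| ≤
        Real.sqrt (∫ z in Ioo (0:ℝ) 1, 1 / (Q₀ z * D z)) *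
          Real.sqrt B * ε ^ (γ / 2)) ∧
    TendstoUniformlyOn
      (fun ε a => g ε a - ∫ a' in Ioo (0:ℝ) 1, g ε a' * Q₀ a')
      (fun _ => 0) (nhdsWithin 0 (Ioi 0)) (Ioo (0:ℝ) 1) := by

  have main : ∀ ε > (0:ℝ), ∀ a ∈ Ioo (0:ℝ) 1,
      |g ε a - ∫ a' in Ioo (0:ℝ) 1, g ε a' * Q₀ a'| ≤
        Real.sqrt (∫ z in Ioo (0:ℝ) 1, 1 / (Q₀ z * D z)) * Real.sqrt B * ε ^ (γ / 2) := by
    intro ε hε a ha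
    set u : ℝ → ℝ := fun z => 1 / (Q₀ z * D z) with hu_def
    set v : ℝ → ℝ := fun z => Q₀ z * D z * (g' ε z) ^ 2 with hv_def
    have hQD : ∀ z ∈ Ioo (0:ℝ) 1, 0 < Q₀ z * D z := fun z hz =>
      mul_pos (hQ₀pos z hz) (hDpos z hz)
    have hu0 : ∀ z ∈ Ioo (0:ℝ) 1, 0 ≤ u z := fun z hz =>
      le_of_lt (by simpa [hu_def] using one_div_pos.2 (hQD z hz))
    have hv0 : ∀ z ∈ Ioo (0:ℝ) 1, 0 ≤ v z := fun z hz =>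
      mul_nonneg (hQD z hz).le (sq_nonneg _)
    -- key oscillation bound
    have key : ∀ a' ∈ Ioo (0:ℝ) 1, |g ε a - g ε a'| ≤
        Real.sqrt (∫ z in Ioo (0:ℝ) 1, u z) *
          Real.sqrt (∫ z in Ioo (0:ℝ) 1, v z) := by
      intro a' ha'
      rw [hAC ε hε a ha a' ha']
      have hsub : Ι a' a ⊆ Ioo (0:ℝ) 1 := by
        intro z hz
        rw [Set.mem_uIoc] at hz
        rcases hz with hz | hz
        · exact ⟨lt_trans ha'.1 hz.1, lt_of_le_of_lt hz.2 ha.2⟩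
        · exact ⟨lt_trans ha.1 hz.1, lt_of_le_of_lt hz.2 ha'.2⟩
      have hmeas : MeasurableSet (Ι a' a) := measurableSet_uIoc
      have step1 : |∫ z in a'..a, g' ε z| ≤ ∫ z in Ι a' a, ‖g' ε z‖ := by
        simpa [Real.norm_eq_abs] using
          intervalIntegral.norm_integral_le_integral_norm_uIoc (f := g' ε) (a := a') (b := a)
            (μ := volume)
      have step2 : ∫ z in Ι a' a, ‖g' ε z‖ =
          ∫ z in Ι a' a, Real.sqrt (u z) * Real.sqrt (v z) := by
        refine setIntegral_congr_fun hmeas fun z hz => ?_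
        have hzI : z ∈ Ioo (0:ℝ) 1 := hsub hz
        have hQDz : 0 < Q₀ z * D z := hQD z hzI
        have : u z * v z = (g' ε z) ^ 2 := by
          simp only [hu_def, hv_def]
          field_simp
          exact mul_div_cancel_left₀ _ hQDz.ne'
        rw [← Real.sqrt_mul (hu0 z hzI), this, Real.sqrt_sq_eq_abs, Real.norm_eq_abs]
      have hiu : Integrable u (volume.restrict (Ι a' a)) := hinvint.mono_set hsub
      have hiv : Integrable v (volume.restrict (Ι a' a)) := (hEnergyInt ε hε).mono_set hsub
      have hau : 0 ≤ᵐ[volume.restrict (Ι a' a)] u :=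
        (ae_restrict_iff' hmeas).2 (ae_of_all _ fun z hz => hu0 z (hsub hz))
      have hav : 0 ≤ᵐ[volume.restrict (Ι a' a)] v :=
        (ae_restrict_iff' hmeas).2 (ae_of_all _ fun z hz => hv0 z (hsub hz))
      have step3 := cs_sqrt u v hiu hiv hau hav
      have hauo : 0 ≤ᵐ[volume.restrict (Ioo (0:ℝ) 1)] u :=
        (ae_restrict_iff' measurableSet_Ioo).2 (ae_of_all _ hu0)
      have havo : 0 ≤ᵐ[volume.restrict (Ioo (0:ℝ) 1)] v :=
        (ae_restrict_iff' measurableSet_Ioo).2 (ae_of_all _ hv0)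
      have hmu : ∫ z in Ι a' a, u z ≤ ∫ z in Ioo (0:ℝ) 1, u z :=
        setIntegral_mono_set hinvint hauo (HasSubset.Subset.eventuallyLE hsub)
      have hmv : ∫ z in Ι a' a, v z ≤ ∫ z in Ioo (0:ℝ) 1, v z :=
        setIntegral_mono_set (hEnergyInt ε hε) havo (HasSubset.Subset.eventuallyLE hsub)
      calc |∫ z in a'..a, g' ε z| ≤ ∫ z in Ι a' a, ‖g' ε z‖ := step1
        _ = ∫ z in Ι a' a, Real.sqrt (u z) * Real.sqrt (v z) := step2
        _ ≤ Real.sqrt (∫ z in Ι a' a, u z) * Real.sqrt (∫ z in Ι a' a, v z) := step3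
        _ ≤ Real.sqrt (∫ z in Ioo (0:ℝ) 1, u z) * Real.sqrt (∫ z in Ioo (0:ℝ) 1, v z) :=
            mul_le_mul (Real.sqrt_le_sqrt hmu) (Real.sqrt_le_sqrt hmv)
              (Real.sqrt_nonneg _) (Real.sqrt_nonneg _)
    set K : ℝ := Real.sqrt (∫ z in Ioo (0:ℝ) 1, u z) *
      Real.sqrt (∫ z in Ioo (0:ℝ) 1, v z) with hK_def
    have hK0 : 0 ≤ K := mul_nonneg (Real.sqrt_nonneg _) (Real.sqrt_nonneg _)
    have hQint : IntegrableOn Q₀ (Ioo (0:ℝ) 1) := by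
      by_contra h
      rw [integral_undef h] at hQ₀prob
      exact one_ne_zero hQ₀prob.symm
    have hint1 : IntegrableOn (fun a' => g ε a * Q₀ a') (Ioo (0:ℝ) 1) :=
      hQint.const_mul (g ε a)
    have hint2 := hgQint ε hε
    have hsplit : g ε a - (∫ a' in Ioo (0:ℝ) 1, g ε a' * Q₀ a') =
        ∫ a' in Ioo (0:ℝ) 1, (g ε a - g ε a') * Q₀ a' := by
      have : ∫ a' in Ioo (0:ℝ) 1, (g ε a - g ε a') * Q₀ a' =
          (∫ a' in Ioo (0:ℝ) 1, g ε a * Q₀ a') - ∫ a' in Ioo (0:ℝ) 1, g ε a' * Q₀ a' := by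
        rw [← integral_sub hint1 hint2]
        congr 1
        ext a'
        ring
      rw [this, integral_const_mul, hQ₀prob, mul_one]
    have habs : |g ε a - ∫ a' in Ioo (0:ℝ) 1, g ε a' * Q₀ a'| ≤ K := by
      rw [hsplit]
      calc |∫ a' in Ioo (0:ℝ) 1, (g ε a - g ε a') * Q₀ a'|
          ≤ ∫ a' in Ioo (0:ℝ) 1, |g ε a - g ε a'| * |Q₀ a'| := by
            simpa [Real.norm_eq_abs] using
              norm_integral_le_integral_norm (μ := volume.restrict (Ioo (0:ℝ) 1))
                (f := fun a' => (g ε a - g ε a') * Q₀ a')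
        _ ≤ ∫ a' in Ioo (0:ℝ) 1, K * Q₀ a' := by
            refine setIntegral_mono_on ((hint1.sub hint2).abs.congr ?_) (hQint.const_mul K)
              measurableSet_Ioo fun a' ha' => ?_
            · exact ae_of_all _ fun a' => by simp only [Pi.sub_apply, ← sub_mul, abs_mul]
            · rw [abs_of_nonneg (hQ₀pos a' ha').le]
              exact mul_le_mul_of_nonneg_right (key a' ha') (hQ₀pos a' ha').le
        _ = K := by rw [integral_const_mul, hQ₀prob, mul_one]
    refine habs.trans ?_
    have hvB : Real.sqrt (∫ z in Ioo (0:ℝ) 1, v z) ≤ Real.sqrt B * ε ^ (γ / 2) := by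
      have h1 : Real.sqrt (∫ z in Ioo (0:ℝ) 1, v z) ≤ Real.sqrt (B * ε ^ γ) :=
        Real.sqrt_le_sqrt (hEnergy ε hε)
      have h2 : Real.sqrt (B * ε ^ γ) = Real.sqrt B * ε ^ (γ / 2) := by
        rw [Real.sqrt_mul hB.le]
        congr 1
        rw [Real.sqrt_eq_rpow, ← Real.rpow_mul hε.le, mul_one_div]
      rw [← h2]; exact h1
    calc K ≤ Real.sqrt (∫ z in Ioo (0:ℝ) 1, u z) * (Real.sqrt B * ε ^ (γ / 2)) :=
          mul_le_mul_of_nonneg_left hvB (Real.sqrt_nonneg _)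
      _ = Real.sqrt (∫ z in Ioo (0:ℝ) 1, u z) * Real.sqrt B * ε ^ (γ / 2) := by ring
  refine ⟨main, ?_⟩
  rw [Metric.tendstoUniformlyOn_iff]
  intro δ hδ
  have hrp : Tendsto (fun ε : ℝ => ε ^ (γ / 2)) (nhdsWithin 0 (Ioi 0)) (nhds 0) := by
    have hc : ContinuousAt (fun x : ℝ => x ^ (γ / 2)) 0 :=
      Real.continuousAt_rpow_const 0 (γ / 2) (Or.inr (by positivity))
    have := hc.tendsto.mono_left (nhdsWithin_le_nhds (s := Ioi (0:ℝ)))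
    simpa [Real.zero_rpow (ne_of_gt (by positivity : (0:ℝ) < γ / 2))] using this
  have htend : Tendsto (fun ε : ℝ =>
      Real.sqrt (∫ z in Ioo (0:ℝ) 1, 1 / (Q₀ z * D z)) * Real.sqrt B * ε ^ (γ / 2))
      (nhdsWithin 0 (Ioi 0)) (nhds 0) := by
    simpa using hrp.const_mul
      (Real.sqrt (∫ z in Ioo (0:ℝ) 1, 1 / (Q₀ z * D z)) * Real.sqrt B)
  filter_upwards [htend.eventually (gt_mem_nhds hδ), self_mem_nhdsWithin] with ε h1 h2
  intro a ha
  rw [dist_comm, dist_zero_right, Real.norm_eq_abs]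
  exact lt_of_le_of_lt (main ε h2 a ha) h1
end
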